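/- Let (ω(t), g(t)) be the solution of ω' = -2p, g' = -2q on a Lie algebra g starting at (ω₀,g₀), and let c(t) > 0, φ(t) ∈ Aut(g) be differentiable with c(0)=1, φ(0)=I, D := φ'(0). If the starting curvature operators satisfy c'(0)I + (D - J₀D^tJ₀) = -2P(ω₀,g₀) and c'(0)I + (D + D^t) = -2Q(ω₀,g₀), then the solution is explicitly ω(t) = (c'(0)t+1) ω₀(e^{s(t)D}·, e^{s(t)D}·), g(t) = (c'(0)t+1) g₀(e^{s(t)D}·, e^{s(t)D}·), where s(t) = log(c'(0)t+1)/c'(0) if c'(0) ≠ 0 and s(t) = t otherwise. -/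

import Mathlib

open ContinuousLinearMap
open scoped RealInnerProductSpace

/-!
The self-similar family `(γt + 1) (e^{s(t)D})^*(ω₀, g₀)` solves the flow. Since `e^{sD}` is an
automorphism of the bracket (`D` is a derivation), scaling invariance and equivariance make its
curvature operators `(γt + 1)⁻¹ e^{-sD} P(ω₀, g₀) e^{sD}` (and likewise for `Q`), while its time
derivative is the pullback of `γ ω₀ + ω₀(D·, ·) + ω₀(·, D·)`, which hypothesis (ii) rewrites as
`-2 ω₀(P(ω₀, g₀)·, ·)`. Uniqueness of the flow then identifies it with the given solution.
-/

/-- Pullback `(ψ*ω)(X,Y) = ω(ψX, ψY)` of a bilinear form by an endomorphism. -/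
noncomputable def pullForm {V : Type*} [NormedAddCommGroup V] [NormedSpace ℝ V]
    (ψ : V →L[ℝ] V) (ω : V →L[ℝ] V →L[ℝ] ℝ) : V →L[ℝ] V →L[ℝ] ℝ :=
  (((ω.comp ψ).flip).comp ψ).flip

section Exp

variable {V : Type*} [NormedAddCommGroup V] [NormedSpace ℝ V] [CompleteSpace V]

theorem exp_mul_exp_neg (A : V →L[ℝ] V) : NormedSpace.exp A * NormedSpace.exp (-A) = 1 := by
  let _ : NormedAlgebra ℚ (V →L[ℝ] V) := NormedAlgebra.restrictScalars ℚ ℝ (V →L[ℝ] V)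
  rw [← NormedSpace.exp_add_of_commute (Commute.refl A).neg_right, add_neg_cancel,
    NormedSpace.exp_zero]

theorem exp_neg_mul_exp (A : V →L[ℝ] V) : NormedSpace.exp (-A) * NormedSpace.exp A = 1 := by
  simpa using exp_mul_exp_neg (-A)

theorem hasDerivAt_exp_smul_apply (D : V →L[ℝ] V) (X : V) (s : ℝ) :
    HasDerivAt (fun u : ℝ => NormedSpace.exp (u • D) X) (D (NormedSpace.exp (s • D) X)) s := by
  simpa using (hasDerivAt_exp_smul_const' D s).clm_apply (hasDerivAt_const s X)

/-- Both sides solve `y' = D y` with `y 0 = L X Y`, by the Leibniz rule for `D`. -/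
theorem exp_smul_map_of_derivation (L : V →L[ℝ] V →L[ℝ] V) {D : V →L[ℝ] V}
    (hD : ∀ X Y : V, D (L X Y) = L (D X) Y + L X (D Y)) (s : ℝ) (X Y : V) :
    NormedSpace.exp (s • D) (L X Y)
      = L (NormedSpace.exp (s • D) X) (NormedSpace.exp (s • D) Y) := by
  have hlhs (u : ℝ) := hasDerivAt_exp_smul_apply D (L X Y) u
  have hrhs (u : ℝ) :
      HasDerivAt (fun u : ℝ => L (NormedSpace.exp (u • D) X) (NormedSpace.exp (u • D) Y))
        (D (L (NormedSpace.exp (u • D) X) (NormedSpace.exp (u • D) Y))) u := by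
    rw [hD]
    exact (L.hasFDerivAt.comp_hasDerivAt u (hasDerivAt_exp_smul_apply D X u)).clm_apply
      (hasDerivAt_exp_smul_apply D Y u)
  have := ODE_solution_unique_univ (v := fun _ => D) (s := fun _ => Set.univ) (t₀ := 0)
    (fun _ => D.lipschitz.lipschitzOnWith) (fun u => ⟨hlhs u, trivial⟩)
    (fun u => ⟨hrhs u, trivial⟩) (by simp)
  exact congrFun this s

end Exp

section PullForm

variable {V : Type*} [NormedAddCommGroup V] [NormedSpace ℝ V]

@[simp]
theorem pullForm_apply (ψ : V →L[ℝ] V) (β : V →L[ℝ] V →L[ℝ] ℝ) (X Y : V) :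
    pullForm ψ β X Y = β (ψ X) (ψ Y) := rfl

@[simp]
theorem pullForm_one (β : V →L[ℝ] V →L[ℝ] ℝ) : pullForm 1 β = β := rfl

theorem pullForm_add (ψ : V →L[ℝ] V) (β β' : V →L[ℝ] V →L[ℝ] ℝ) :
    pullForm ψ (β + β') = pullForm ψ β + pullForm ψ β' := rfl

theorem pullForm_smul (ψ : V →L[ℝ] V) (c : ℝ) (β : V →L[ℝ] V →L[ℝ] ℝ) :
    pullForm ψ (c • β) = c • pullForm ψ β := rfl

theorem pullForm_comp_conj {ψ χ : V →L[ℝ] V} (hψχ : ψ ∘L χ = 1) (β : V →L[ℝ] V →L[ℝ] ℝ)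
    (R : V →L[ℝ] V) : (pullForm ψ β).comp (χ ∘L R ∘L ψ) = pullForm ψ (β.comp R) := by
  ext X Y
  simp [← comp_apply ψ χ, hψχ]

theorem hasDerivAt_flip {f : ℝ → V →L[ℝ] V →L[ℝ] ℝ} {f' : V →L[ℝ] V →L[ℝ] ℝ} {t : ℝ}
    (h : HasDerivAt f f' t) : HasDerivAt (fun u => (f u).flip) f'.flip t := by
  have := (LinearIsometryEquiv.hasFDerivAt (E := V →L[ℝ] V →L[ℝ] ℝ)
    (F := V →L[ℝ] V →L[ℝ] ℝ) (flipₗᵢ ℝ V V ℝ) (x := f t)).comp_hasDerivAt t h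
  exact this

theorem HasDerivAt.pullForm {ψ : ℝ → V →L[ℝ] V} {ψ' : V →L[ℝ] V} {t : ℝ}
    (hψ : HasDerivAt ψ ψ' t) (β : V →L[ℝ] V →L[ℝ] ℝ) :
    HasDerivAt (fun u => pullForm (ψ u) β)
      ((β.comp ψ').flip.comp (ψ t) + (β.comp (ψ t)).flip.comp ψ').flip t := by
  refine HasDerivAt.congr_deriv (𝕜 := ℝ) (F := V →L[ℝ] V →L[ℝ] ℝ)
    (hasDerivAt_flip ((hasDerivAt_flip ((hasDerivAt_const t β).clm_comp hψ)).clm_comp hψ)) ?_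
  rw [zero_comp, zero_add]

noncomputable def pullFormDeriv (D : V →L[ℝ] V) (β : V →L[ℝ] V →L[ℝ] ℝ) :
    V →L[ℝ] V →L[ℝ] ℝ :=
  β.comp D + (β.flip.comp D).flip

@[simp]
theorem pullFormDeriv_apply (D : V →L[ℝ] V) (β : V →L[ℝ] V →L[ℝ] ℝ) (X Y : V) :
    pullFormDeriv D β X Y = β (D X) Y + β X (D Y) := rfl

theorem hasDerivAt_pullForm_exp_smul [CompleteSpace V] (D : V →L[ℝ] V)
    (β : V →L[ℝ] V →L[ℝ] ℝ) (s : ℝ) :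
    HasDerivAt (fun u : ℝ => pullForm (NormedSpace.exp (u • D)) β)
      (pullForm (NormedSpace.exp (s • D)) (pullFormDeriv D β)) s := by
  refine HasDerivAt.congr_deriv (𝕜 := ℝ) (F := V →L[ℝ] V →L[ℝ] ℝ)
    ((hasDerivAt_exp_smul_const' D s).pullForm β) ?_
  ext X Y
  simp [add_comm]

end PullForm

section Inner

variable {V : Type*} [NormedAddCommGroup V] [InnerProductSpace ℝ V] [CompleteSpace V]

theorem pullFormDeriv_eq_comp_of_inner {β : V →L[ℝ] V →L[ℝ] ℝ}
    (hβ : ∀ X Y : V, β X Y = ⟪X, Y⟫) (D : V →L[ℝ] V) :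
    pullFormDeriv D β = β.comp (D + adjoint D) := by
  ext X Y
  simp [hβ, adjoint_inner_left, add_comm]

/-- `J (J D^t J) = -D^t J` turns `⟪J X, D Y⟫ = ⟪D^t J X, Y⟫` into `-⟪J (J D^t J) X, Y⟫`. -/
theorem pullFormDeriv_eq_comp_of_inner_complexStructure {β : V →L[ℝ] V →L[ℝ] ℝ}
    {J : V →L[ℝ] V} (hJ : J ∘L J = -1) (hβ : ∀ X Y : V, β X Y = ⟪J X, Y⟫) (D : V →L[ℝ] V) :
    pullFormDeriv D β = β.comp (D - J ∘L adjoint D ∘L J) := by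
  have hJJ (Z : V) : J (J Z) = -Z := by simpa using congrArg (· Z) hJ
  ext X Y
  simp [hβ, hJJ, adjoint_inner_left]

end Inner

section SelfSimilar

variable {V : Type*} [NormedAddCommGroup V] [NormedSpace ℝ V]

noncomputable def solitonTime (γ t : ℝ) : ℝ :=
  if γ = 0 then t else Real.log (γ * t + 1) / γ

theorem solitonTime_zero (γ : ℝ) : solitonTime γ 0 = 0 := by
  simp [solitonTime]

theorem hasDerivAt_solitonTime {γ t : ℝ} (ht : 0 < γ * t + 1) :
    HasDerivAt (solitonTime γ) (γ * t + 1)⁻¹ t := by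
  unfold solitonTime
  split_ifs with hγ
  · simpa [hγ] using hasDerivAt_id' t
  · have hlin : HasDerivAt (fun t : ℝ => γ * t + 1) γ t := by
      simpa using ((hasDerivAt_id t).const_mul γ).add_const 1
    refine (((Real.hasDerivAt_log ht.ne').comp t hlin).div_const γ).congr_deriv ?_
    field_simp

noncomputable def selfSimilarForm (γ : ℝ) (D : V →L[ℝ] V) (β : V →L[ℝ] V →L[ℝ] ℝ) (t : ℝ) :
    V →L[ℝ] V →L[ℝ] ℝ :=
  (γ * t + 1) • pullForm (NormedSpace.exp (solitonTime γ t • D)) β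

theorem selfSimilarForm_zero [CompleteSpace V] (γ : ℝ) (D : V →L[ℝ] V)
    (β : V →L[ℝ] V →L[ℝ] ℝ) : selfSimilarForm γ D β 0 = β := by
  simp [selfSimilarForm, solitonTime_zero]

/-- The factor `γt + 1` cancels `s'(t) = (γt + 1)⁻¹`, leaving the pullback of
`γ β + pullFormDeriv D β = β ∘ (γ + A)`. -/
theorem hasDerivAt_selfSimilarForm [CompleteSpace V] {γ t : ℝ} {D A R : V →L[ℝ] V}
    {β : V →L[ℝ] V →L[ℝ] ℝ} (hβ : pullFormDeriv D β = β.comp A)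
    (hA : γ • (1 : V →L[ℝ] V) + A = (-2 : ℝ) • R) (ht : 0 < γ * t + 1) :
    HasDerivAt (selfSimilarForm γ D β)
      ((-2 : ℝ) • pullForm (NormedSpace.exp (solitonTime γ t • D)) (β.comp R)) t := by
  have hc : HasDerivAt (fun t : ℝ => γ * t + 1) γ t := by
    simpa using ((hasDerivAt_id t).const_mul γ).add_const 1
  have hpull := (hasDerivAt_pullForm_exp_smul D β (solitonTime γ t)).scomp
    (𝕜 := ℝ) (F := V →L[ℝ] V →L[ℝ] ℝ) t (hasDerivAt_solitonTime ht)
  have : IsBoundedSMul ℝ (V →L[ℝ] V →L[ℝ] ℝ) :=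
    NormedSpace.toIsBoundedSMul (𝕜 := ℝ) (E := V →L[ℝ] V →L[ℝ] ℝ)
  refine HasDerivAt.congr_deriv (𝕜 := ℝ) (F := V →L[ℝ] V →L[ℝ] ℝ) (hc.smul hpull) ?_
  rw [smul_smul, mul_inv_cancel₀ ht.ne', one_smul, Function.comp_apply, hβ, ← pullForm_smul,
    ← pullForm_add, ← pullForm_smul, ← comp_smul, ← hA, comp_add, comp_smul, one_def, comp_id,
    add_comm (β.comp A)]

end SelfSimilar

section Curvature

variable {V : Type*} [NormedAddCommGroup V] [NormedSpace ℝ V]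

def IsScaleInvariant
    (F : (V →L[ℝ] V →L[ℝ] ℝ) → (V →L[ℝ] V →L[ℝ] ℝ) → (V →L[ℝ] V)) : Prop :=
  ∀ c : ℝ, c ≠ 0 → ∀ ω g, F (c • ω) (c • g) = c⁻¹ • F ω g

def IsAutEquivariant (L : V →L[ℝ] V →L[ℝ] V)
    (F : (V →L[ℝ] V →L[ℝ] ℝ) → (V →L[ℝ] V →L[ℝ] ℝ) → (V →L[ℝ] V)) : Prop :=
  ∀ ψ χ : V →L[ℝ] V, ψ ∘L χ = 1 → χ ∘L ψ = 1 → (∀ X Y : V, ψ (L X Y) = L (ψ X) (ψ Y)) →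
    ∀ ω g, F (pullForm ψ ω) (pullForm ψ g) = χ ∘L F ω g ∘L ψ

theorem smul_pullForm_comp_curvature {L : V →L[ℝ] V →L[ℝ] V}
    {F : (V →L[ℝ] V →L[ℝ] ℝ) → (V →L[ℝ] V →L[ℝ] ℝ) → (V →L[ℝ] V)}
    (hFscal : IsScaleInvariant F) (hFaut : IsAutEquivariant L F) {c : ℝ} (hc : c ≠ 0)
    {ψ χ : V →L[ℝ] V} (hψχ : ψ ∘L χ = 1) (hχψ : χ ∘L ψ = 1)
    (hψL : ∀ X Y : V, ψ (L X Y) = L (ψ X) (ψ Y)) (β ω g : V →L[ℝ] V →L[ℝ] ℝ) :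
    (c • pullForm ψ β).comp (F (c • pullForm ψ ω) (c • pullForm ψ g))
      = pullForm ψ (β.comp (F ω g)) := by
  rw [hFscal c hc, hFaut ψ χ hψχ hχψ hψL, smul_comp, comp_smul, smul_smul, mul_inv_cancel₀ hc,
    one_smul, pullForm_comp_conj hψχ]

end Curvature

theorem soliton_explicit_solution_general {V : Type*} [NormedAddCommGroup V]
    [InnerProductSpace ℝ V] [FiniteDimensional ℝ V]
    -- the Lie bracket of `g`
    (L : V →L[ℝ] V →L[ℝ] V)
    (J₀ : V →L[ℝ] V) (hJ₀2 : J₀ ∘L J₀ = -1)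
    -- the curvature operators as functions of the pair `(ω, g)`
    (Pf Qf : (V →L[ℝ] V →L[ℝ] ℝ) → (V →L[ℝ] V →L[ℝ] ℝ) → (V →L[ℝ] V))
    -- scaling invariance: `P(cω,cg) = (1/c)P(ω,g)` and likewise for `Q`
    (hPscal : ∀ (c : ℝ), c ≠ 0 → ∀ ω' g', Pf (c • ω') (c • g') = c⁻¹ • Pf ω' g')
    (hQscal : ∀ (c : ℝ), c ≠ 0 → ∀ ω' g', Qf (c • ω') (c • g') = c⁻¹ • Qf ω' g')
    -- equivariance under automorphisms of the bracket
    (hPaut : ∀ ψ χ : V →L[ℝ] V, ψ ∘L χ = 1 → χ ∘L ψ = 1 →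
      (∀ X Y : V, ψ (L X Y) = L (ψ X) (ψ Y)) →
      ∀ ω' g', Pf (pullForm ψ ω') (pullForm ψ g') = χ ∘L (Pf ω' g') ∘L ψ)
    (hQaut : ∀ ψ χ : V →L[ℝ] V, ψ ∘L χ = 1 → χ ∘L ψ = 1 →
      (∀ X Y : V, ψ (L X Y) = L (ψ X) (ψ Y)) →
      ∀ ω' g', Qf (pullForm ψ ω') (pullForm ψ g') = χ ∘L (Qf ω' g') ∘L ψ)
    -- initial almost-hermitian structure
    (ω₀ g₀ : V →L[ℝ] V →L[ℝ] ℝ)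
    (hω₀ : ∀ X Y : V, ω₀ X Y = ⟪J₀ X, Y⟫)
    (hg₀ : ∀ X Y : V, g₀ X Y = ⟪X, Y⟫)
    -- the `(p,q)`-flow solution starting at `(ω₀, g₀)`
    (ω g : ℝ → (V →L[ℝ] V →L[ℝ] ℝ))
    -- `γ = c'(0)` and the derivation `D = φ'(0)`
    (γ : ℝ) (D : V →L[ℝ] V)
    (hD : ∀ X Y : V, D (L X Y) = L (D X) Y + L X (D Y))
    -- hypothesis (ii) on the starting curvature operators
    (hsol1 : γ • (1 : V →L[ℝ] V) + (D - J₀ ∘L (ContinuousLinearMap.adjoint D) ∘L J₀)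
      = (-2 : ℝ) • Pf ω₀ g₀)
    (hsol2 : γ • (1 : V →L[ℝ] V) + (D + ContinuousLinearMap.adjoint D)
      = (-2 : ℝ) • Qf ω₀ g₀)
    -- uniqueness of solutions of the `(p,q)`-flow on `{t | γt + 1 > 0}`
    (huniq : ∀ ω' g' : ℝ → (V →L[ℝ] V →L[ℝ] ℝ), ω' 0 = ω₀ → g' 0 = g₀ →
      (∀ t : ℝ, 0 < γ*t + 1 →
        HasDerivAt ω' ((-2 : ℝ) • ((ω' t).comp (Pf (ω' t) (g' t)))) t ∧
        HasDerivAt g' ((-2 : ℝ) • ((g' t).comp (Qf (ω' t) (g' t)))) t) →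
      ∀ t : ℝ, 0 < γ*t + 1 → ω' t = ω t ∧ g' t = g t) :
    ∀ t : ℝ, 0 < γ*t + 1 →
      ω t = (γ*t + 1) • pullForm
        (NormedSpace.exp ((if γ = 0 then t else Real.log (γ*t + 1) / γ) • D)) ω₀ ∧
      g t = (γ*t + 1) • pullForm
        (NormedSpace.exp ((if γ = 0 then t else Real.log (γ*t + 1) / γ) • D)) g₀ := by
  have : CompleteSpace V := FiniteDimensional.complete ℝ V
  have hflow (t : ℝ) (ht : 0 < γ * t + 1) :
      HasDerivAt (selfSimilarForm γ D ω₀) ((-2 : ℝ) • ((selfSimilarForm γ D ω₀ t).comp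
        (Pf (selfSimilarForm γ D ω₀ t) (selfSimilarForm γ D g₀ t)))) t ∧
      HasDerivAt (selfSimilarForm γ D g₀) ((-2 : ℝ) • ((selfSimilarForm γ D g₀ t).comp
        (Qf (selfSimilarForm γ D ω₀ t) (selfSimilarForm γ D g₀ t)))) t := by
    set a := solitonTime γ t
    have hψχ := exp_mul_exp_neg (a • D)
    have hχψ := exp_neg_mul_exp (a • D)
    have hψL := exp_smul_map_of_derivation L hD a
    simp only [selfSimilarForm]
    rw [smul_pullForm_comp_curvature hPscal hPaut ht.ne' hψχ hχψ hψL,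
      smul_pullForm_comp_curvature hQscal hQaut ht.ne' hψχ hχψ hψL]
    exact ⟨hasDerivAt_selfSimilarForm (pullFormDeriv_eq_comp_of_inner_complexStructure hJ₀2 hω₀ D)
        hsol1 ht, hasDerivAt_selfSimilarForm (pullFormDeriv_eq_comp_of_inner hg₀ D) hsol2 ht⟩
  intro t ht
  obtain ⟨hω, hg⟩ :=
    huniq _ _ (selfSimilarForm_zero γ D ω₀) (selfSimilarForm_zero γ D g₀) hflow t ht
  exact ⟨hω.symm, hg.symm⟩

/-- Lemma 6.1 (ii) ⇒ (iii) of the paper: if the starting curvature operators of a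
`(p,q)`-flow solution satisfy
`c'(0)I + (D - J₀D^tJ₀) = -2P(ω₀,g₀)` and `c'(0)I + (D + D^t) = -2Q(ω₀,g₀)`
for a derivation `D`, then the solution is explicitly the self-similar family
`ω(t) = (c'(0)t+1) ω₀(e^{s(t)D}·, e^{s(t)D}·)`,
`g(t) = (c'(0)t+1) g₀(e^{s(t)D}·, e^{s(t)D}·)`,
with `s(t) = log(c'(0)t+1)/c'(0)` (and `s(t) = t` if `c'(0) = 0`). -/
theorem soliton_explicit_solution {V : Type*} [NormedAddCommGroup V]
    [InnerProductSpace ℝ V] [FiniteDimensional ℝ V]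
    -- the Lie bracket of `g`
    (L : V →L[ℝ] V →L[ℝ] V)
    (halt : ∀ X : V, L X X = 0)
    (hjac : ∀ X Y Z : V, L X (L Y Z) + L Y (L Z X) + L Z (L X Y) = 0)
    (J₀ : V →L[ℝ] V) (hJ₀2 : J₀ ∘L J₀ = -1)
    (hJ₀adj : ContinuousLinearMap.adjoint J₀ = -J₀)
    -- the curvature operators as functions of the pair `(ω, g)`
    (Pf Qf : (V →L[ℝ] V →L[ℝ] ℝ) → (V →L[ℝ] V →L[ℝ] ℝ) → (V →L[ℝ] V))
    -- scaling invariance: `P(cω,cg) = (1/c)P(ω,g)` and likewise for `Q`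
    (hPscal : ∀ (c : ℝ), c ≠ 0 → ∀ ω' g', Pf (c • ω') (c • g') = c⁻¹ • Pf ω' g')
    (hQscal : ∀ (c : ℝ), c ≠ 0 → ∀ ω' g', Qf (c • ω') (c • g') = c⁻¹ • Qf ω' g')
    -- equivariance under automorphisms of the bracket
    (hPaut : ∀ ψ χ : V →L[ℝ] V, ψ ∘L χ = 1 → χ ∘L ψ = 1 →
      (∀ X Y : V, ψ (L X Y) = L (ψ X) (ψ Y)) →
      ∀ ω' g', Pf (pullForm ψ ω') (pullForm ψ g') = χ ∘L (Pf ω' g') ∘L ψ)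
    (hQaut : ∀ ψ χ : V →L[ℝ] V, ψ ∘L χ = 1 → χ ∘L ψ = 1 →
      (∀ X Y : V, ψ (L X Y) = L (ψ X) (ψ Y)) →
      ∀ ω' g', Qf (pullForm ψ ω') (pullForm ψ g') = χ ∘L (Qf ω' g') ∘L ψ)
    -- initial almost-hermitian structure
    (ω₀ g₀ : V →L[ℝ] V →L[ℝ] ℝ)
    (hω₀ : ∀ X Y : V, ω₀ X Y = ⟪J₀ X, Y⟫)
    (hg₀ : ∀ X Y : V, g₀ X Y = ⟪X, Y⟫)
    -- the `(p,q)`-flow solution starting at `(ω₀, g₀)`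
    (ω g : ℝ → (V →L[ℝ] V →L[ℝ] ℝ))
    (hω0 : ω 0 = ω₀) (hg0 : g 0 = g₀)
    (hωflow : ∀ t : ℝ, HasDerivAt ω ((-2 : ℝ) • ((ω t).comp (Pf (ω t) (g t)))) t)
    (hgflow : ∀ t : ℝ, HasDerivAt g ((-2 : ℝ) • ((g t).comp (Qf (ω t) (g t)))) t)
    -- `γ = c'(0)` and the derivation `D = φ'(0)`
    (γ : ℝ) (D : V →L[ℝ] V)
    (hD : ∀ X Y : V, D (L X Y) = L (D X) Y + L X (D Y))
    -- hypothesis (ii) on the starting curvature operators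
    (hsol1 : γ • (1 : V →L[ℝ] V) + (D - J₀ ∘L (ContinuousLinearMap.adjoint D) ∘L J₀)
      = (-2 : ℝ) • Pf ω₀ g₀)
    (hsol2 : γ • (1 : V →L[ℝ] V) + (D + ContinuousLinearMap.adjoint D)
      = (-2 : ℝ) • Qf ω₀ g₀)
    -- uniqueness of solutions of the `(p,q)`-flow on `{t | γt + 1 > 0}`
    (huniq : ∀ ω' g' : ℝ → (V →L[ℝ] V →L[ℝ] ℝ), ω' 0 = ω₀ → g' 0 = g₀ →
      (∀ t : ℝ, 0 < γ*t + 1 →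
        HasDerivAt ω' ((-2 : ℝ) • ((ω' t).comp (Pf (ω' t) (g' t)))) t ∧
        HasDerivAt g' ((-2 : ℝ) • ((g' t).comp (Qf (ω' t) (g' t)))) t) →
      ∀ t : ℝ, 0 < γ*t + 1 → ω' t = ω t ∧ g' t = g t) :
    ∀ t : ℝ, 0 < γ*t + 1 →
      ω t = (γ*t + 1) • pullForm
        (NormedSpace.exp ((if γ = 0 then t else Real.log (γ*t + 1) / γ) • D)) ω₀ ∧
      g t = (γ*t + 1) • pullForm
        (NormedSpace.exp ((if γ = 0 then t else Real.log (γ*t + 1) / γ) • D)) g₀ :=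
  soliton_explicit_solution_general L J₀ hJ₀2 Pf Qf hPscal hQscal hPaut hQaut ω₀ g₀ hω₀ hg₀ ω g γ D
    hD hsol1 hsol2 huniq
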